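/- The set S_M = π_M^{-1}(Q_M) is dense in M, where Q_M = (ℚ ∩ [0, λ(M)]) ∪ {λ(M)} ∪ E_M and E_M is the set of t whose fiber π_M^{-1}(t) contains more than one point. -/
import Mathlib


open MeasureTheory Set

/-- Measure projection `π_M`. -/
noncomputable def piProj (M : Set ℝ) (x : ℝ) : ℝ :=
  (volume (Set.Icc (sInf M) x ∩ M)).toReal

lemma piProj_nonneg (M : Set ℝ) (x : ℝ) : 0 ≤ piProj M x := ENNReal.toReal_nonneg

lemma vol_ne_top (M : Set ℝ) (hM : IsCompact M) (s : Set ℝ) (hs : s ⊆ M) :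
    volume s ≠ ⊤ :=
  ne_of_lt (lt_of_le_of_lt (measure_mono hs) hM.measure_lt_top)

lemma piProj_mono (M : Set ℝ) (hM : IsCompact M) : Monotone (piProj M) := by
  intro x y hxy
  unfold piProj
  refine ENNReal.toReal_mono (vol_ne_top M hM _ inter_subset_right)
    (measure_mono (inter_subset_inter_left _ (Icc_subset_Icc_right hxy)))

lemma piProj_le (M : Set ℝ) (hM : IsCompact M) (x : ℝ) :
    piProj M x ≤ (volume M).toReal :=
  ENNReal.toReal_mono (ne_of_lt hM.measure_lt_top) (measure_mono inter_subset_right)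

lemma piProj_add (M : Set ℝ) (hM : IsCompact M) {x y : ℝ} (hax : sInf M ≤ x) (hxy : x ≤ y) :
    piProj M y = piProj M x + (volume (M ∩ Ioc x y)).toReal := by
  have hMeas : MeasurableSet (M ∩ Ioc x y) := hM.measurableSet.inter measurableSet_Ioc
  have hset : Icc (sInf M) y ∩ M = (Icc (sInf M) x ∩ M) ∪ (M ∩ Ioc x y) := by
    ext m; constructor
    · rintro ⟨⟨h1, h2⟩, hm⟩
      rcases le_or_gt m x with h | h
      · exact Or.inl ⟨⟨h1, h⟩, hm⟩
      · exact Or.inr ⟨hm, h, h2⟩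
    · rintro (⟨⟨h1, h2⟩, hm⟩ | ⟨hm, h1, h2⟩)
      · exact ⟨⟨h1, h2.trans hxy⟩, hm⟩
      · exact ⟨⟨hax.trans h1.le, h2⟩, hm⟩
  have hdisj : Disjoint (Icc (sInf M) x ∩ M) (M ∩ Ioc x y) := by
    apply Set.disjoint_left.mpr
    rintro m ⟨⟨_, h2⟩, _⟩ ⟨_, h3, _⟩
    exact absurd h2 (not_le.mpr h3)
  unfold piProj
  rw [hset, measure_union hdisj hMeas,
    ENNReal.toReal_add (vol_ne_top M hM _ inter_subset_right)
      (vol_ne_top M hM _ inter_subset_left)]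

lemma piProj_cont (M : Set ℝ) (hM : IsCompact M) : Continuous (piProj M) := by
  have key : ∀ x y : ℝ, x ≤ y → piProj M y ≤ piProj M x + (y - x) := by
    intro x y hxy
    have hsub : Icc (sInf M) y ∩ M ⊆ (Icc (sInf M) x ∩ M) ∪ Ioc x y := by
      rintro m ⟨⟨h1, h2⟩, hm⟩
      rcases le_or_gt m x with h | h
      · exact Or.inl ⟨⟨h1, h⟩, hm⟩
      · exact Or.inr ⟨h, h2⟩
    have h1 : volume (Icc (sInf M) y ∩ M) ≤
        volume (Icc (sInf M) x ∩ M) + volume (Ioc x y) :=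
      (measure_mono hsub).trans (measure_union_le _ _)
    have h2 : (volume (Icc (sInf M) y ∩ M)).toReal ≤
        (volume (Icc (sInf M) x ∩ M)).toReal + (volume (Ioc x y)).toReal := by
      rw [← ENNReal.toReal_add (vol_ne_top M hM _ inter_subset_right)
        (by simp [Real.volume_Ioc])]
      exact ENNReal.toReal_mono
        (by exact ENNReal.add_ne_top.2 ⟨vol_ne_top M hM _ inter_subset_right,
          by simp [Real.volume_Ioc]⟩) h1
    have h3 : (volume (Ioc x y)).toReal = y - x := by
      rw [Real.volume_Ioc, ENNReal.toReal_ofReal (by linarith)]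
    unfold piProj
    rw [← h3]; exact h2
  have : LipschitzWith 1 (piProj M) := by
    apply LipschitzWith.of_dist_le_mul
    intro x y
    rw [Real.dist_eq, Real.dist_eq]
    simp only [NNReal.coe_one, one_mul]
    rcases le_total x y with h | h
    · have h1 := piProj_mono M hM h
      have h2 := key x y h
      rw [abs_of_nonpos (by linarith : piProj M x - piProj M y ≤ 0),
        abs_of_nonpos (by linarith : x - y ≤ 0)]
      linarith
    · have h1 := piProj_mono M hM h
      have h2 := key y x h
      rw [abs_of_nonneg (by linarith : 0 ≤ piProj M x - piProj M y),
        abs_of_nonneg (by linarith : 0 ≤ x - y)]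
      linarith
  exact this.continuous

lemma piProj_sSup (M : Set ℝ) (hM : IsCompact M) {z : ℝ} (hne : (M ∩ Iic z).Nonempty) :
    ∃ y ∈ M, y ≤ z ∧ piProj M y = piProj M z := by
  have hcomp : IsCompact (M ∩ Iic z) := hM.inter_right isClosed_Iic
  obtain ⟨hyM, hyz⟩ := hcomp.sSup_mem hne
  set y := sSup (M ∩ Iic z)
  refine ⟨y, hyM, hyz, ?_⟩
  have hay : sInf M ≤ y := csInf_le hM.bddBelow hyM
  have hempty : M ∩ Ioc y z = ∅ := by
    ext m
    simp only [mem_inter_iff, mem_Ioc, mem_empty_iff_false, iff_false, not_and]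
    intro hm h1 h2
    exact absurd (le_csSup hcomp.bddAbove ⟨hm, h2⟩) (not_le.mpr h1)
  rw [piProj_add M hM hay hyz, hempty]
  simp

lemma piProj_sInf (M : Set ℝ) (hM : IsCompact M) {z : ℝ} (hne : (M ∩ Ici z).Nonempty) :
    ∃ y ∈ M, z ≤ y ∧ M ∩ Ico z y = ∅ := by
  have hcomp : IsCompact (M ∩ Ici z) := hM.inter_right isClosed_Ici
  obtain ⟨hyM, hyz⟩ := hcomp.sInf_mem hne
  set y := sInf (M ∩ Ici z)
  refine ⟨y, hyM, hyz, ?_⟩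
  ext m
  simp only [mem_inter_iff, mem_Ico, mem_empty_iff_false, iff_false, not_and]
  intro hm h1 h2
  exact absurd (csInf_le hcomp.bddBelow ⟨hm, h1⟩) (not_le.mpr h2)

theorem stmt16 (M : Set ℝ) (hM : IsCompact M) (hpos : 0 < volume M) :
    let v := (volume M).toReal
    let E : Set ℝ := {t ∈ Set.Icc (0 : ℝ) v |
      ∃ x y, x ∈ M ∧ y ∈ M ∧ x ≠ y ∧ piProj M x = t ∧ piProj M y = t}
    let Q : Set ℝ := ((Set.range ((↑) : ℚ → ℝ)) ∩ Set.Icc (0 : ℝ) v) ∪ {v} ∪ E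
    M ⊆ closure {x ∈ M | piProj M x ∈ Q} := by
  intro v E Q x hx
  rw [Metric.mem_closure_iff]
  intro ε hε
  have hax : sInf M ≤ x := csInf_le hM.bddBelow hx
  have hzero : ∀ c : ℝ, volume (M ∩ {c}) = 0 :=
    fun c => measure_mono_null inter_subset_right (Real.volume_singleton)
  -- Case A-right : positive measure just to the right
  rcases eq_or_ne (volume (M ∩ Ioc x (x + ε / 2))) 0 with hR | hR
  · -- right side null
    rcases eq_or_ne (volume (M ∩ Ioc (x - ε / 2) x)) 0 with hL | hL
    · -- Case B : both sides null; show x itself is in the set via E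
      have hget : ∃ y ∈ M, y ≠ x ∧ piProj M y = piProj M x := by
        by_cases hne : (M ∩ Iic (x - ε / 2)).Nonempty
        · obtain ⟨y, hyM, hyz, hpy⟩ := piProj_sSup M hM hne
          refine ⟨y, hyM, by intro h; rw [h] at hyz; linarith, ?_⟩
          rw [hpy, piProj_add M hM (le_trans (csInf_le hM.bddBelow hne.choose_spec.1)
            hne.choose_spec.2) (by linarith : x - ε / 2 ≤ x), hL]
          simp
        · -- M below x - ε/2 is empty, so piProj M x = 0
          have hxzero : piProj M x = 0 := by
            have hsub : Icc (sInf M) x ∩ M ⊆ M ∩ Ioc (x - ε / 2) x := by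
              rintro m ⟨⟨h1, h2⟩, hm⟩
              refine ⟨hm, ?_, h2⟩
              by_contra h
              exact hne ⟨m, hm, le_of_not_gt h⟩
            unfold piProj
            rw [measure_mono_null hsub hL]
            simp
          have hne2 : (M ∩ Ici (x + ε / 2)).Nonempty := by
            by_contra h
            rw [not_nonempty_iff_eq_empty] at h
            have hsub : M ⊆ (M ∩ Ioc (x - ε / 2) x) ∪ (M ∩ Ioc x (x + ε / 2)) := by
              intro m hm
              have hm1 : ¬ (x + ε / 2 ≤ m) := fun hc => by
                have : m ∈ M ∩ Ici (x + ε / 2) := ⟨hm, hc⟩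
                simp [h] at this
              have hm2 : ¬ (m ≤ x - ε / 2) := fun hc => hne ⟨m, hm, hc⟩
              rcases le_or_gt m x with h' | h'
              · exact Or.inl ⟨hm, by linarith, h'⟩
              · exact Or.inr ⟨hm, h', by linarith⟩
            exact absurd (measure_mono_null hsub (measure_union_null hL hR))
              (ne_of_gt hpos)
          obtain ⟨y, hyM, hyz, hempty⟩ := piProj_sInf M hM hne2
          refine ⟨y, hyM, by intro h; rw [h] at hyz; linarith, ?_⟩
          have hay : sInf M ≤ x := hax
          have hyzero : piProj M y = 0 := by
            rw [piProj_add M hM hax (by linarith : x ≤ y), hxzero]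
            have hsub : M ∩ Ioc x y ⊆ (M ∩ Ioc x (x + ε / 2)) ∪ (M ∩ Ico (x + ε / 2) y)
                ∪ (M ∩ {y}) := by
              rintro m ⟨hm, h1, h2⟩
              rcases le_or_gt m (x + ε / 2) with h' | h'
              · exact Or.inl (Or.inl ⟨hm, h1, h'⟩)
              rcases lt_or_eq_of_le h2 with h'' | h''
              · exact Or.inl (Or.inr ⟨hm, h'.le, h''⟩)
              · exact Or.inr ⟨hm, h''⟩
            have hmid : volume (M ∩ Ico (x + ε / 2) y) = 0 := by
              rw [hempty]; exact measure_empty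
            have : volume (M ∩ Ioc x y) = 0 :=
              measure_mono_null hsub
                (measure_union_null (measure_union_null hR hmid) (hzero y))
            rw [this]; simp
          rw [hyzero, hxzero]
      obtain ⟨y, hyM, hyne, hpy⟩ := hget
      refine ⟨x, ⟨hx, Or.inr ⟨⟨piProj_nonneg M x, piProj_le M hM x⟩,
        x, y, hx, hyM, fun h => hyne h.symm, rfl, hpy⟩⟩, by simpa using hε⟩
    · -- Case A-left : positive measure on the left
      set w := max (sInf M) (x - ε / 2) with hw
      have haw : sInf M ≤ w := le_max_left _ _
      have hwx : w ≤ x := max_le hax (by linarith)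
      have hLw : volume (M ∩ Ioc w x) ≠ 0 := by
        intro h0
        apply hL
        have hsub : M ∩ Ioc (x - ε / 2) x ⊆ (M ∩ Ioc w x) ∪ (M ∩ {sInf M}) := by
          rintro m ⟨hm, h1, h2⟩
          rcases lt_or_ge w m with h' | h'
          · exact Or.inl ⟨hm, h', h2⟩
          · have hm1 : sInf M ≤ m := csInf_le hM.bddBelow hm
            have : m = sInf M := by
              rcases le_total (sInf M) (x - ε / 2) with hc | hc
              · exfalso
                rw [hw, max_eq_right hc] at h'
                linarith
              · rw [hw, max_eq_left hc] at h'
                linarith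
            exact Or.inr ⟨hm, this⟩
        exact measure_mono_null hsub (measure_union_null h0 (hzero _))
      have hlt : piProj M w < piProj M x := by
        rw [piProj_add M hM haw hwx]
        have : 0 < (volume (M ∩ Ioc w x)).toReal :=
          ENNReal.toReal_pos hLw (vol_ne_top M hM _ inter_subset_left)
        linarith
      obtain ⟨q, hq1, hq2⟩ := exists_rat_btwn hlt
      have hq0 : (0 : ℝ) < q := lt_of_le_of_lt (piProj_nonneg M w) hq1
      have hqv : (q : ℝ) ≤ v := le_trans hq2.le (piProj_le M hM x)
      have hsurj := intermediate_value_Icc hwx (piProj_cont M hM).continuousOn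
      obtain ⟨z, hz, hpz⟩ := hsurj ⟨hq1.le, hq2.le⟩
      have hnez : (M ∩ Iic z).Nonempty := by
        by_contra h
        have : Icc (sInf M) z ∩ M = ∅ := by
          ext m
          simp only [mem_inter_iff, mem_Icc, mem_empty_iff_false, iff_false, not_and]
          rintro ⟨_, h2⟩ hm
          exact h ⟨m, hm, h2⟩
        have : piProj M z = 0 := by unfold piProj; rw [this]; simp
        rw [this] at hpz; rw [← hpz] at hq0; linarith
      obtain ⟨y, hyM, hyz, hpy⟩ := piProj_sSup M hM hnez
      rw [hpz] at hpy
      have hyx : w < y := by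
        by_contra h
        push_neg at h
        have := piProj_mono M hM h
        rw [hpy] at this
        linarith
      refine ⟨y, ⟨hyM, Or.inl (Or.inl ⟨⟨q, hpy.symm⟩, by rw [hpy]; exact hq0.le, by rw [hpy]; exact hqv⟩)⟩, ?_⟩
      rw [Real.dist_eq, abs_of_nonneg (by linarith [hz.2, hyz] : 0 ≤ x - y)]
      have : x - ε / 2 ≤ w := le_max_right _ _
      linarith [hz.2, hyz]
  · -- Case A-right : positive measure on the right
    have hlt : piProj M x < piProj M (x + ε / 2) := by
      rw [piProj_add M hM hax (by linarith : x ≤ x + ε / 2)]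
      have : 0 < (volume (M ∩ Ioc x (x + ε / 2))).toReal :=
        ENNReal.toReal_pos hR (vol_ne_top M hM _ inter_subset_left)
      linarith
    obtain ⟨q, hq1, hq2⟩ := exists_rat_btwn hlt
    have hq0 : (0 : ℝ) ≤ q := le_trans (piProj_nonneg M x) hq1.le
    have hqv : (q : ℝ) ≤ v := le_trans hq2.le (piProj_le M hM _)
    have hsurj := intermediate_value_Icc (by linarith : x ≤ x + ε / 2)
      (piProj_cont M hM).continuousOn
    obtain ⟨z, hz, hpz⟩ := hsurj ⟨hq1.le, hq2.le⟩
    obtain ⟨y, hyM, hyz, hpy⟩ := piProj_sSup M hM ⟨x, hx, hz.1⟩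
    rw [hpz] at hpy
    have hxy : x < y := by
      by_contra h
      push_neg at h
      have := piProj_mono M hM h
      rw [hpy] at this
      linarith
    refine ⟨y, ⟨hyM, Or.inl (Or.inl ⟨⟨q, hpy.symm⟩, by rw [hpy]; exact ⟨hq0, hqv⟩⟩)⟩, ?_⟩
    rw [Real.dist_eq, abs_of_nonpos (by linarith : x - y ≤ 0)]
    have := hz.2
    linarith [hyz]
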